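/- Let S be a finite family of entrywise nonnegative matrices in ℝ^{n×n} with probability weights μ : S → [0,1], ∑ μ = 1, let L ≥ 1, and let π be a probability weight function on pairs (A, D), where A ∈ S and D is a delay matrix with entries in {0,…,L}, satisfying ∑_D π(A, D) = μ(A) for each A ∈ S. Then ρ(E_π[S_L]) < 1 if and only if ρ(E_μ[S]) < 1, where E_π[S_L] = ∑_{A∈S} ∑_D π(A,D) · A_D and E_μ[S] = ∑_{A∈S} μ(A) A. -/

import Mathlib

/-!
For an entrywise nonnegative matrix `N`, `ρ(N) < 1` holds exactly when `N v < v` for some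
positive vector `v`. If such a `v` exists, comparing an eigenvector `x` with `v` at an index
maximising `|x i| / v i` shows that every eigenvalue has modulus `< 1`. Conversely, Gelfand's
formula makes the Neumann series `S = ∑ Nᵏ` converge, and `v = S 1 ≥ 1` satisfies `N v = v - 1`.

For `M = E_π[S_L]` the rows `(i, ℓ + 1)` only shift `u (i, ℓ)` one layer up, because the weights
`π` sum to `1`, while on vectors that are constant along layers the rows `(i, 0)` act as
`E_μ[S]`. So if `M w < w` with `w > 0`, then `w` increases along layers and `w (·, 0)` works for
`E_μ[S]`. If `E_μ[S] v < v`, then `w (i, ℓ) = v i + ℓ ε` works for `M` once `ε > 0` is small.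
-/

open Matrix BigOperators

/-- The spectral radius of a real square matrix: the maximum modulus of its
complex eigenvalues. -/
noncomputable def specRad {m : Type*} [Fintype m] [DecidableEq m]
    (A : Matrix m m ℝ) : ℝ :=
  (spectralRadius ℂ (A.map (algebraMap ℝ ℂ))).toReal

/-- The delayed matrix `A_D` of a matrix `A` with delay matrix `D`:
`(A_D)_{(i,0),(j,m)} = A i j` if `D i j = m` and `0` otherwise,
`(A_D)_{(i,ℓ+1),(j,ℓ)} = 1` if `i = j` and `0` otherwise, all other entries zero. -/
def delayedMatrix {n L : ℕ} (A : Matrix (Fin n) (Fin n) ℝ)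
    (D : Fin n → Fin n → Fin (L + 1)) :
    Matrix (Fin n × Fin (L + 1)) (Fin n × Fin (L + 1)) ℝ :=
  fun p q =>
    if (p.2 : ℕ) = 0 then (if D p.1 q.1 = q.2 then A p.1 q.1 else 0)
    else if p.1 = q.1 ∧ (q.2 : ℕ) + 1 = (p.2 : ℕ) then 1 else 0

open Filter Topology

section BanachAlgebra

variable {A : Type*} [NormedRing A] [CompleteSpace A]

theorem spectrum.spectralRadius_ne_top {𝕜 : Type*} [NormedField 𝕜] [NormedAlgebra 𝕜 A]
    (a : A) : spectralRadius 𝕜 a ≠ ⊤ :=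
  ne_top_of_le_ne_top (ENNReal.coe_ne_top (r := ‖a‖₊ * ‖(1 : A)‖₊)) <| iSup₂_le fun _ hk =>
    ENNReal.coe_le_coe.2 (spectrum.norm_le_norm_mul_of_mem hk)

theorem spectrum.summable_pow_of_spectralRadius_lt_one [NormedAlgebra ℂ A] {a : A}
    (h : spectralRadius ℂ a < 1) : Summable (a ^ ·) := by
  obtain ⟨r, hρr, hr1⟩ := ENNReal.lt_iff_exists_nnreal_btwn.mp h
  have hr1 : (r : ℝ) < 1 := by exact_mod_cast hr1
  refine .of_norm_bounded_eventually_nat (summable_geometric_of_lt_one r.coe_nonneg hr1) ?_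
  filter_upwards [(pow_nnnorm_pow_one_div_tendsto_nhds_spectralRadius a).eventually_lt_const hρr,
    eventually_ne_atTop 0] with k hk hk0
  have := ENNReal.pow_lt_pow_left (n := k) hk0 hk
  rw [← ENNReal.rpow_natCast, ← ENNReal.rpow_mul, one_div,
    inv_mul_cancel₀ (by exact_mod_cast hk0), ENNReal.rpow_one] at this
  exact_mod_cast this.le

end BanachAlgebra

section NonnegMatrix

variable {m : Type*} [Fintype m] {N : Matrix m m ℝ}

theorem Matrix.mulVec_le_mulVec_of_nonneg (hN : ∀ i j, 0 ≤ N i j) {u v : m → ℝ} (huv : u ≤ v) :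
    N *ᵥ u ≤ N *ᵥ v :=
  fun i => dotProduct_le_dotProduct_of_nonneg_left huv (hN i)

theorem Matrix.eventually_mulVec_add_smul_lt {v : m → ℝ} (h : ∀ i, (N *ᵥ v) i < v i)
    (w : m → ℝ) : ∀ᶠ t in 𝓝 (0 : ℝ), ∀ i, (N *ᵥ (v + t • w)) i < v i := by
  refine eventually_all.2 fun i => ?_
  have hc : Continuous fun t : ℝ => (N *ᵥ (v + t • w)) i := by
    simp only [mulVec_add, mulVec_smul, Pi.add_apply, Pi.smul_apply, smul_eq_mul]
    fun_prop
  exact (hc.tendsto' 0 _ (by simp)).eventually_lt_const (h i)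

theorem Matrix.lt_one_of_smul_le_mulVec (hN : ∀ i j, 0 ≤ N i j) {v : m → ℝ}
    (hv : ∀ i, 0 < v i) (hNv : ∀ i, (N *ᵥ v) i < v i) {y : m → ℝ} (hy : 0 ≤ y) (hy0 : y ≠ 0)
    {r : ℝ} (hr : ∀ i, r * y i ≤ (N *ᵥ y) i) : r < 1 := by
  obtain ⟨j, hj⟩ := Function.ne_iff.mp hy0
  obtain ⟨i, -, hi⟩ :=
    Finset.exists_max_image Finset.univ (fun i => y i / v i) ⟨j, Finset.mem_univ _⟩
  set c := y i / v i
  have hyc : y ≤ c • v := fun k => (div_le_iff₀ (hv k)).1 (hi k (Finset.mem_univ _))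
  have hc : 0 < c := (div_pos ((hy j).lt_of_ne' hj) (hv j)).trans_le (hi j (Finset.mem_univ _))
  have hyi : 0 < y i := by simpa [c, hv i] using mul_pos hc (hv i)
  have : r * y i < y i := calc
    r * y i ≤ (N *ᵥ y) i := hr i
    _ ≤ (N *ᵥ (c • v)) i := mulVec_le_mulVec_of_nonneg hN hyc i
    _ = c * (N *ᵥ v) i := by rw [mulVec_smul, Pi.smul_apply, smul_eq_mul]
    _ < c * v i := mul_lt_mul_of_pos_left (hNv i) hc
    _ = y i := div_mul_cancel₀ _ (hv i).ne'
  exact (mul_lt_iff_lt_one_left hyi).1 this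

variable [DecidableEq m]

theorem Matrix.norm_lt_one_of_mem_spectrum (hN : ∀ i j, 0 ≤ N i j) {v : m → ℝ}
    (hv : ∀ i, 0 < v i) (hNv : ∀ i, (N *ᵥ v) i < v i) {z : ℂ}
    (hz : z ∈ spectrum ℂ (N.map (algebraMap ℝ ℂ))) : ‖z‖ < 1 := by
  rw [← spectrum_toLin', ← Module.End.hasEigenvalue_iff_mem_spectrum] at hz
  obtain ⟨x, hx⟩ := hz.exists_hasEigenvector
  have hNx : N.map (algebraMap ℝ ℂ) *ᵥ x = z • x := by simpa using hx.apply_eq_smul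
  refine lt_one_of_smul_le_mulVec hN hv hNv (y := fun i => ‖x i‖) (fun i => norm_nonneg _)
    (fun h => hx.2 (funext fun i => norm_eq_zero.1 (congrFun h i))) fun i => ?_
  calc ‖z‖ * ‖x i‖ = ‖∑ j, (N i j : ℂ) * x j‖ := by
        rw [← norm_mul, ← smul_eq_mul, ← Pi.smul_apply, ← hNx]
        simp [mulVec, dotProduct]
    _ ≤ ∑ j, ‖(N i j : ℂ) * x j‖ := norm_sum_le _ _
    _ = (N *ᵥ fun j => ‖x j‖) i := by
        simp [mulVec, dotProduct, Complex.norm_real, abs_of_nonneg (hN i _)]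

section LinftyOpNorm

-- The spectral radius does not depend on the norm; this one makes Gelfand's formula available.
attribute [local instance] Matrix.linftyOpNormedRing Matrix.linftyOpNormedAlgebra

theorem specRad_lt_one_iff_spectralRadius_lt_one (N : Matrix m m ℝ) :
    specRad N < 1 ↔ spectralRadius ℂ (N.map (algebraMap ℝ ℂ)) < 1 := by
  rw [specRad, ← ENNReal.toReal_one, ENNReal.toReal_lt_toReal (spectrum.spectralRadius_ne_top _)
    ENNReal.one_ne_top]

theorem specRad_lt_one_of_pos_mulVec_lt (hN : ∀ i j, 0 ≤ N i j) {v : m → ℝ}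
    (hv : ∀ i, 0 < v i) (hNv : ∀ i, (N *ᵥ v) i < v i) : specRad N < 1 := by
  rw [specRad_lt_one_iff_spectralRadius_lt_one]
  obtain hσ | hσ := (spectrum ℂ (N.map (algebraMap ℝ ℂ))).eq_empty_or_nonempty
  · rw [spectralRadius, hσ]
    simp
  · have := spectrum.spectralRadius_lt_of_forall_lt_of_nonempty (r := 1) hσ fun z hz => by
      simpa [← NNReal.coe_lt_one] using norm_lt_one_of_mem_spectrum hN hv hNv hz
    exact_mod_cast this

theorem summable_pow_of_specRad_lt_one (h : specRad N < 1) : Summable (N ^ ·) := by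
  have hc := spectrum.summable_pow_of_spectralRadius_lt_one
    ((specRad_lt_one_iff_spectralRadius_lt_one N).1 h)
  convert hc.map Complex.reAddGroupHom.mapMatrix (continuous_id.matrix_map Complex.continuous_re)
  ext k : 1
  rw [Function.comp_apply, ← Matrix.map_pow]
  simp

end LinftyOpNorm

theorem exists_nonneg_eq_one_add_mul_of_specRad_lt_one (hN : ∀ i j, 0 ≤ N i j)
    (h : specRad N < 1) : ∃ S : Matrix m m ℝ, (∀ i j, 0 ≤ S i j) ∧ S = 1 + N * S := by
  have hs := summable_pow_of_specRad_lt_one h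
  refine ⟨∑' k, N ^ k, fun i j => ?_, ?_⟩
  · exact (Pi.hasSum.1 (Pi.hasSum.1 hs.hasSum i) j).nonneg fun k => pow_apply_nonneg hN k i j
  · have := hs.one_sub_mul_tsum_pow
    rwa [sub_mul, one_mul, sub_eq_iff_eq_add] at this

theorem exists_pos_mulVec_lt_of_specRad_lt_one (hN : ∀ i j, 0 ≤ N i j) (h : specRad N < 1) :
    ∃ v : m → ℝ, (∀ i, 0 < v i) ∧ ∀ i, (N *ᵥ v) i < v i := by
  obtain ⟨S, hS0, hS⟩ := exists_nonneg_eq_one_add_mul_of_specRad_lt_one hN h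
  have hNS (i : m) : (N *ᵥ (S *ᵥ 1)) i = (S *ᵥ 1) i - 1 := by
    rw [mulVec_mulVec]
    nth_rewrite 2 [hS]
    simp [add_mulVec]
  have hNS0 (i : m) : 0 ≤ (N *ᵥ (S *ᵥ 1)) i :=
    dotProduct_nonneg_of_nonneg (hN i) fun j => dotProduct_nonneg_of_nonneg (hS0 j) zero_le_one
  exact ⟨S *ᵥ 1, fun i => by linarith [hNS i, hNS0 i], fun i => by linarith [hNS i]⟩

theorem specRad_lt_one_iff_exists_pos_mulVec_lt (hN : ∀ i j, 0 ≤ N i j) :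
    specRad N < 1 ↔ ∃ v : m → ℝ, (∀ i, 0 < v i) ∧ ∀ i, (N *ᵥ v) i < v i :=
  ⟨exists_pos_mulVec_lt_of_specRad_lt_one hN, fun ⟨_, hv, hNv⟩ =>
    specRad_lt_one_of_pos_mulVec_lt hN hv hNv⟩

end NonnegMatrix

section DelayedMatrix

variable {n L : ℕ}

theorem delayedMatrix_nonneg {A : Matrix (Fin n) (Fin n) ℝ} (hA : ∀ i j, 0 ≤ A i j)
    (D : Fin n → Fin n → Fin (L + 1)) (p q : Fin n × Fin (L + 1)) : 0 ≤ delayedMatrix A D p q := by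
  unfold delayedMatrix
  split_ifs <;> first | exact hA _ _ | norm_num

theorem mulVec_delayedMatrix_zero (A : Matrix (Fin n) (Fin n) ℝ) (D : Fin n → Fin n → Fin (L + 1))
    (u : Fin n × Fin (L + 1) → ℝ) (i : Fin n) :
    (delayedMatrix A D *ᵥ u) (i, 0) = ∑ j, A i j * u (j, D i j) := by
  simp [mulVec, dotProduct, Fintype.sum_prod_type, delayedMatrix, ite_mul]

theorem mulVec_delayedMatrix_succ (A : Matrix (Fin n) (Fin n) ℝ) (D : Fin n → Fin n → Fin (L + 1))
    (u : Fin n × Fin (L + 1) → ℝ) (i : Fin n) (k : Fin L) :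
    (delayedMatrix A D *ᵥ u) (i, k.succ) = u (i, k.castSucc) := by
  rw [mulVec, dotProduct, Fintype.sum_eq_single (i, k.castSucc)]
  · simp [delayedMatrix]
  · rintro ⟨j, l⟩ hjl
    simp only [delayedMatrix, Fin.val_succ, Nat.add_one_ne_zero, if_false, ite_mul, one_mul,
      zero_mul, ite_eq_right_iff]
    rintro ⟨rfl, hl⟩
    exact absurd (by ext <;> simp; omega) hjl

end DelayedMatrix

section ExpectedDelayedMatrix

variable {n L : ℕ} {ι : Type*} [Fintype ι]

def expectedDelayedMatrix (A : ι → Matrix (Fin n) (Fin n) ℝ)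
    (π : ι → (Fin n → Fin n → Fin (L + 1)) → ℝ) :
    Matrix (Fin n × Fin (L + 1)) (Fin n × Fin (L + 1)) ℝ :=
  ∑ f, ∑ D, π f D • delayedMatrix (A f) D

variable {A : ι → Matrix (Fin n) (Fin n) ℝ} {π : ι → (Fin n → Fin n → Fin (L + 1)) → ℝ}

theorem expectedDelayedMatrix_nonneg (hA : ∀ f i j, 0 ≤ A f i j) (hπ0 : ∀ f D, 0 ≤ π f D)
    (p q : Fin n × Fin (L + 1)) : 0 ≤ expectedDelayedMatrix A π p q := by
  simp only [expectedDelayedMatrix, Matrix.sum_apply, Matrix.smul_apply, smul_eq_mul]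
  exact Finset.sum_nonneg fun f _ => Finset.sum_nonneg fun D _ =>
    mul_nonneg (hπ0 f D) (delayedMatrix_nonneg (hA f) D p q)

theorem mulVec_expectedDelayedMatrix (u : Fin n × Fin (L + 1) → ℝ) (p : Fin n × Fin (L + 1)) :
    (expectedDelayedMatrix A π *ᵥ u) p = ∑ f, ∑ D, π f D * (delayedMatrix (A f) D *ᵥ u) p := by
  simp [expectedDelayedMatrix, sum_mulVec, smul_mulVec]

theorem mulVec_expectedDelayedMatrix_succ (hπ1 : ∑ f, ∑ D, π f D = 1)
    (u : Fin n × Fin (L + 1) → ℝ) (i : Fin n) (k : Fin L) :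
    (expectedDelayedMatrix A π *ᵥ u) (i, k.succ) = u (i, k.castSucc) := by
  simp [mulVec_expectedDelayedMatrix, mulVec_delayedMatrix_succ, ← Finset.sum_mul, hπ1]

theorem mulVec_expectedDelayedMatrix_comp_fst_zero (x : Fin n → ℝ) (i : Fin n) :
    (expectedDelayedMatrix A π *ᵥ fun p => x p.1) (i, 0) =
      ((∑ f, (∑ D, π f D) • A f) *ᵥ x) i := by
  rw [mulVec_expectedDelayedMatrix, sum_mulVec, Finset.sum_apply]
  simp only [mulVec_delayedMatrix_zero, smul_mulVec, Pi.smul_apply, smul_eq_mul, Finset.sum_mul]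
  rfl

theorem exists_pos_mulVec_lt_of_expectedDelayedMatrix_mulVec_lt (hA : ∀ f i j, 0 ≤ A f i j)
    (hπ0 : ∀ f D, 0 ≤ π f D) (hπ1 : ∑ f, ∑ D, π f D = 1) {w : Fin n × Fin (L + 1) → ℝ}
    (hw : ∀ p, 0 < w p) (hMw : ∀ p, (expectedDelayedMatrix A π *ᵥ w) p < w p) :
    ∃ v : Fin n → ℝ, (∀ i, 0 < v i) ∧ ∀ i, ((∑ f, (∑ D, π f D) • A f) *ᵥ v) i < v i := by
  have hmono (i : Fin n) (l : Fin (L + 1)) : w (i, 0) ≤ w (i, l) := by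
    induction l using Fin.induction with
    | zero => rfl
    | succ k ih =>
      have := hMw (i, k.succ)
      rw [mulVec_expectedDelayedMatrix_succ hπ1] at this
      exact ih.trans this.le
  refine ⟨fun i => w (i, 0), fun i => hw _, fun i => ?_⟩
  calc ((∑ f, (∑ D, π f D) • A f) *ᵥ fun i => w (i, 0)) i
      = (expectedDelayedMatrix A π *ᵥ fun p => w (p.1, 0)) (i, 0) :=
        (mulVec_expectedDelayedMatrix_comp_fst_zero _ i).symm
    _ ≤ (expectedDelayedMatrix A π *ᵥ w) (i, 0) :=
        mulVec_le_mulVec_of_nonneg (expectedDelayedMatrix_nonneg hA hπ0)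
          (fun p => hmono p.1 p.2) _
    _ < w (i, 0) := hMw _

theorem exists_pos_expectedDelayedMatrix_mulVec_lt_of_mulVec_lt (hA : ∀ f i j, 0 ≤ A f i j)
    (hπ0 : ∀ f D, 0 ≤ π f D) (hπ1 : ∑ f, ∑ D, π f D = 1) {v : Fin n → ℝ}
    (hv : ∀ i, 0 < v i) (hBv : ∀ i, ((∑ f, (∑ D, π f D) • A f) *ᵥ v) i < v i) :
    ∃ w : Fin n × Fin (L + 1) → ℝ, (∀ p, 0 < w p) ∧
      ∀ p, (expectedDelayedMatrix A π *ᵥ w) p < w p := by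
  have hsmall : ∀ᶠ ε in 𝓝[>] (0 : ℝ),
      ∀ i, ((∑ f, (∑ D, π f D) • A f) *ᵥ (v + ((L : ℝ) * ε) • 1)) i < v i :=
    ((continuous_const_mul (L : ℝ)).tendsto' 0 0 (mul_zero _)).mono_left nhdsWithin_le_nhds
      |>.eventually (eventually_mulVec_add_smul_lt hBv 1)
  obtain ⟨ε, hεv, hε : 0 < ε⟩ := (hsmall.and self_mem_nhdsWithin).exists
  set w : Fin n × Fin (L + 1) → ℝ := fun p => v p.1 + p.2 * ε
  refine ⟨w, fun p => by have := hv p.1; positivity, ?_⟩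
  rintro ⟨i, l⟩
  induction l using Fin.cases with
  | zero =>
    calc (expectedDelayedMatrix A π *ᵥ w) (i, 0)
        ≤ (expectedDelayedMatrix A π *ᵥ fun p => (v + ((L : ℝ) * ε) • 1) p.1) (i, 0) := by
          refine mulVec_le_mulVec_of_nonneg (expectedDelayedMatrix_nonneg hA hπ0) (fun p => ?_) _
          have : (p.2 : ℝ) ≤ L := by exact_mod_cast Fin.is_le p.2
          simp only [w, Pi.add_apply, Pi.smul_apply, Pi.one_apply, smul_eq_mul, mul_one]
          gcongr
      _ = ((∑ f, (∑ D, π f D) • A f) *ᵥ (v + ((L : ℝ) * ε) • 1)) i :=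
          mulVec_expectedDelayedMatrix_comp_fst_zero _ i
      _ < v i := hεv i
      _ = w (i, 0) := by simp [w]
  | succ k =>
    rw [mulVec_expectedDelayedMatrix_succ hπ1]
    simp only [w, Fin.val_castSucc, Fin.val_succ, Nat.cast_add, Nat.cast_one]
    linarith

end ExpectedDelayedMatrix

theorem stmt12 {n L : ℕ} {ι : Type*} [Fintype ι]
    (A : ι → Matrix (Fin n) (Fin n) ℝ) (hA : ∀ f i j, 0 ≤ A f i j)
    (μ : ι → ℝ) (hμ1 : ∑ f, μ f = 1)
    (π : ι → (Fin n → Fin n → Fin (L + 1)) → ℝ)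
    (hπ0 : ∀ f D, 0 ≤ π f D)
    (hπμ : ∀ f, ∑ D : Fin n → Fin n → Fin (L + 1), π f D = μ f) :
    specRad (∑ f, ∑ D : Fin n → Fin n → Fin (L + 1),
        π f D • delayedMatrix (A f) D) < 1 ↔
      specRad (∑ f, μ f • A f) < 1 := by
  have hπ1 : ∑ f, ∑ D, π f D = 1 := by simp only [hπμ, hμ1]
  have hB : ∑ f, μ f • A f = ∑ f, (∑ D, π f D) • A f := by simp only [hπμ]
  have hB0 (i j : Fin n) : 0 ≤ (∑ f, (∑ D, π f D) • A f) i j := by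
    simp only [Matrix.sum_apply, Matrix.smul_apply, smul_eq_mul]
    exact Finset.sum_nonneg fun f _ => mul_nonneg (Finset.sum_nonneg fun D _ => hπ0 f D) (hA f i j)
  rw [hB, specRad_lt_one_iff_exists_pos_mulVec_lt hB0]
  change specRad (expectedDelayedMatrix A π) < 1 ↔ _
  rw [specRad_lt_one_iff_exists_pos_mulVec_lt (expectedDelayedMatrix_nonneg hA hπ0)]
  exact ⟨fun ⟨_, hw, hMw⟩ =>
      exists_pos_mulVec_lt_of_expectedDelayedMatrix_mulVec_lt hA hπ0 hπ1 hw hMw,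
    fun ⟨_, hv, hBv⟩ => exists_pos_expectedDelayedMatrix_mulVec_lt_of_mulVec_lt hA hπ0 hπ1 hv hBv⟩
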